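/- arXiv:2402.09971 — 6 statements merged into one kernel-verified Lean document; each statement's English description precedes it below -/
import Mathlib

section
/- Let G be a finite simple graph with positive integer vertex weights w, and let k be a positive integer. If G has a wvi(k)-set, then G has an irredundant wvi(k)-set. -/
open SimpleGraph

variable {V : Type*}

/-- The vertex sets of the connected components of `G − S`
(the subgraph of `G` induced on the complement of `S`). -/
def ccSets (G : SimpleGraph V) (S : Set V) : Set (Set V) :=
  {D | ∃ c : (G.induce Sᶜ).ConnectedComponent, D = Subtype.val '' c.supp}

/-- The total weight of a set of vertices. -/
noncomputable def wsum (w : V → ℕ) (A : Set V) : ℕ := ∑ᶠ v ∈ A, w v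

/-- The weight of a heaviest connected component of `G − S` (`0` if there is none). -/
noncomputable def maxCC (G : SimpleGraph V) (w : V → ℕ) (S : Set V) : ℕ :=
  sSup (wsum w '' ccSets G S)

/-- `S` is a `wvi(k)`-set: `w(S) + max_{D ∈ cc(G−S)} w(D) ≤ k`. -/
def IsWviSet (G : SimpleGraph V) (w : V → ℕ) (k : ℕ) (S : Set V) : Prop :=
  wsum w S + maxCC G w S ≤ k

/-- A vertex `v` is redundant w.r.t. `S`: at most one connected component of `G − S`
contains a neighbor of `v`. -/
def Redundant (G : SimpleGraph V) (S : Set V) (v : V) : Prop :=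
  {D ∈ ccSets G S | ∃ u ∈ D, G.Adj v u}.Subsingleton

/-- `S` is irredundant if it contains no redundant vertex. -/
def Irredundant (G : SimpleGraph V) (S : Set V) : Prop :=
  ∀ v ∈ S, ¬ Redundant G S v

/-! Take a `wvi(k)`-set `S` that is minimal under inclusion. If `v ∈ S` were redundant, then
in `G − (S ∖ {v})` the vertex `v` merges only with the single component `D` of `G − S` adjacent
to it, so the new heaviest component weighs at most `w v + w D`, and `S ∖ {v}` would be a
smaller `wvi(k)`-set. -/

namespace SimpleGraph

def ReachableWithin (G : SimpleGraph V) (s : Set V) (a b : V) : Prop :=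
  ∃ p : G.Walk a b, ∀ x ∈ p.support, x ∈ s

namespace ReachableWithin

variable {G : SimpleGraph V} {s : Set V} {a b c : V}

lemma refl (ha : a ∈ s) : G.ReachableWithin s a a :=
  ⟨.nil, by simpa using ha⟩

lemma symm (h : G.ReachableWithin s a b) : G.ReachableWithin s b a := by
  obtain ⟨p, hp⟩ := h
  exact ⟨p.reverse, by simpa using hp⟩

lemma trans (hab : G.ReachableWithin s a b) (hbc : G.ReachableWithin s b c) :
    G.ReachableWithin s a c := by
  obtain ⟨p, hp⟩ := hab
  obtain ⟨q, hq⟩ := hbc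
  refine ⟨p.append q, fun x hx => ?_⟩
  rcases (Walk.mem_support_append_iff p q).1 hx with hx | hx
  exacts [hp x hx, hq x hx]

lemma left_mem (h : G.ReachableWithin s a b) : a ∈ s := by
  obtain ⟨p, hp⟩ := h
  exact hp a p.start_mem_support

lemma right_mem (h : G.ReachableWithin s a b) : b ∈ s :=
  h.symm.left_mem

lemma of_adj (hab : G.Adj a b) (ha : a ∈ s) (hb : b ∈ s) : G.ReachableWithin s a b :=
  ⟨hab.toWalk, by simp [ha, hb]⟩

end ReachableWithin

variable {G : SimpleGraph V}

lemma reachableWithin_iff_induce_reachable {s : Set V} {a b : s} :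
    G.ReachableWithin s a b ↔ (G.induce s).Reachable a b := by
  constructor
  · rintro ⟨p, hp⟩
    exact ⟨p.induce s hp⟩
  · rintro ⟨p⟩
    induction p with
    | nil => exact .refl (Subtype.prop _)
    | cons hadj _ ih =>
      exact (ReachableWithin.of_adj (G := G) hadj (Subtype.prop _) (Subtype.prop _)).trans ih

/-- Cut the walk at its first visit of `v`. -/
lemma ReachableWithin.of_insert {s : Set V} {v a b : V}
    (h : G.ReachableWithin (insert v s) a b) (ha : a ∈ s) :
    G.ReachableWithin s a b ∨ ∃ n, G.Adj v n ∧ G.ReachableWithin s a n := by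
  obtain ⟨p, hp⟩ := h
  induction p with
  | nil => exact .inl (.refl ha)
  | @cons a c b hac q ih =>
    rcases hp c (by simp) with rfl | hc
    · exact .inr ⟨a, hac.symm, .refl ha⟩
    have hac' : G.ReachableWithin s a c := .of_adj hac ha hc
    rcases ih hc (fun x hx => hp x (by simp [hx])) with hcb | ⟨n, hvn, hcn⟩
    · exact .inl (hac'.trans hcb)
    · exact .inr ⟨n, hvn, hac'.trans hcn⟩

end SimpleGraph

section

variable {G : SimpleGraph V}

lemma image_supp_connectedComponentMk (S : Set V) (x : ↥Sᶜ) :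
    Subtype.val '' ((G.induce Sᶜ).connectedComponentMk x).supp =
      {u | G.ReachableWithin Sᶜ x u} := by
  ext u
  constructor
  · rintro ⟨u, hu, rfl⟩
    exact reachableWithin_iff_induce_reachable.2 (ConnectedComponent.eq.1 hu).symm
  · intro hu
    exact ⟨⟨u, hu.right_mem⟩,
      ConnectedComponent.eq.2 (reachableWithin_iff_induce_reachable.1 hu.symm), rfl⟩

lemma mem_ccSets_iff {S D : Set V} :
    D ∈ ccSets G S ↔ ∃ x ∉ S, D = {u | G.ReachableWithin Sᶜ x u} := by
  constructor
  · rintro ⟨c, rfl⟩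
    induction c using ConnectedComponent.ind with
    | _ x => exact ⟨x, x.2, image_supp_connectedComponentMk S x⟩
  · rintro ⟨x, hx, rfl⟩
    exact ⟨_, (image_supp_connectedComponentMk S ⟨x, hx⟩).symm⟩

/-- A walk through `v` could only join two components of `G − S` that are both adjacent to `v`. -/
lemma Redundant.reachableWithin {S : Set V} {v a b : V} (hvS : v ∈ S) (hred : Redundant G S v)
    (h : G.ReachableWithin (S \ {v})ᶜ a b) (ha : a ∉ S) (hb : b ∉ S) :
    G.ReachableWithin Sᶜ a b := by
  have hcompl : (S \ {v})ᶜ = insert v Sᶜ := by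
    ext u
    by_cases huv : u = v <;> simp [huv, hvS]
  rw [hcompl] at h
  rcases h.of_insert ha with hab | ⟨n, hvn, han⟩
  · exact hab
  rcases h.symm.of_insert hb with hba | ⟨n', hvn', hbn'⟩
  · exact hba.symm
  have hcomp : {u | G.ReachableWithin Sᶜ b u} = {u | G.ReachableWithin Sᶜ a u} :=
    hred ⟨mem_ccSets_iff.2 ⟨b, hb, rfl⟩, n', hbn', hvn'⟩
      ⟨mem_ccSets_iff.2 ⟨a, ha, rfl⟩, n, han, hvn⟩
  have hbb : b ∈ {u | G.ReachableWithin Sᶜ b u} := ReachableWithin.refl hb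
  rwa [hcomp] at hbb

lemma Redundant.exists_ccSets_subset_insert {S D' : Set V} {v : V} (hvS : v ∈ S)
    (hred : Redundant G S v) (hD' : D' ∈ ccSets G (S \ {v})) :
    D' ⊆ {v} ∨ ∃ D ∈ ccSets G S, D' ⊆ insert v D := by
  obtain ⟨x, -, rfl⟩ := mem_ccSets_iff.1 hD'
  by_cases hne : ∃ a, G.ReachableWithin (S \ {v})ᶜ x a ∧ a ≠ v
  · obtain ⟨a, hxa, hav⟩ := hne
    have ha : a ∉ S := fun haS => hxa.right_mem ⟨haS, hav⟩
    refine .inr ⟨_, mem_ccSets_iff.2 ⟨a, ha, rfl⟩, fun u hxu => ?_⟩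
    by_cases huv : u = v
    · exact .inl huv
    have hu : u ∉ S := fun huS => hxu.right_mem ⟨huS, huv⟩
    exact .inr (hred.reachableWithin hvS (hxa.symm.trans hxu) ha hu)
  · push Not at hne
    exact .inl hne

lemma maxCC_le (w : V → ℕ) {S : Set V} {m : ℕ} (h : ∀ D ∈ ccSets G S, wsum w D ≤ m) :
    maxCC G w S ≤ m :=
  csSup_le' (by rintro _ ⟨D, hD, rfl⟩; exact h D hD)

variable [Finite V] (w : V → ℕ)

lemma wsum_mono {A B : Set V} (h : A ⊆ B) : wsum w A ≤ wsum w B := by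
  rw [wsum, wsum, ← finsum_mem_add_sdiff h B.toFinite]
  exact Nat.le_add_right _ _

lemma wsum_insert_le (v : V) (A : Set V) : wsum w (insert v A) ≤ w v + wsum w A := by
  have h := finsum_mem_union_inter (f := w) (Set.finite_singleton v) A.toFinite
  rw [finsum_mem_singleton] at h
  rw [wsum, wsum, Set.insert_eq]
  omega

lemma wsum_eq_add_diff_singleton {S : Set V} {v : V} (hv : v ∈ S) :
    wsum w S = w v + wsum w (S \ {v}) := by
  rw [wsum, wsum, ← finsum_mem_add_sdiff (Set.singleton_subset_iff.2 hv) S.toFinite,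
    finsum_mem_singleton]

lemma le_maxCC {S D : Set V} (hD : D ∈ ccSets G S) : wsum w D ≤ maxCC G w S :=
  le_csSup ⟨wsum w Set.univ, by rintro _ ⟨D, -, rfl⟩; exact wsum_mono w (Set.subset_univ D)⟩
    (Set.mem_image_of_mem _ hD)

lemma Redundant.maxCC_diff_singleton_le {S : Set V} {v : V} (hvS : v ∈ S)
    (hred : Redundant G S v) : maxCC G w (S \ {v}) ≤ w v + maxCC G w S := by
  refine maxCC_le w fun D' hD' => ?_
  rcases hred.exists_ccSets_subset_insert hvS hD' with hsub | ⟨D, hD, hsub⟩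
  · calc wsum w D' ≤ wsum w {v} := wsum_mono w hsub
      _ = w v := finsum_mem_singleton
      _ ≤ w v + maxCC G w S := Nat.le_add_right _ _
  · calc wsum w D' ≤ wsum w (insert v D) := wsum_mono w hsub
      _ ≤ w v + wsum w D := wsum_insert_le w v D
      _ ≤ w v + maxCC G w S := Nat.add_le_add_left (le_maxCC w hD) _

lemma IsWviSet.diff_singleton {k : ℕ} {S : Set V} {v : V} (hS : IsWviSet G w k S)
    (hvS : v ∈ S) (hred : Redundant G S v) : IsWviSet G w k (S \ {v}) := by
  have := hred.maxCC_diff_singleton_le w hvS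
  rw [IsWviSet, wsum_eq_add_diff_singleton w hvS] at hS
  unfold IsWviSet
  omega

end

theorem exists_irredundant_wviSet_general [Fintype V] (G : SimpleGraph V) (w : V → ℕ) (k : ℕ)
    (h : ∃ S : Set V, IsWviSet G w k S) :
    ∃ S : Set V, IsWviSet G w k S ∧ Irredundant G S := by
  obtain ⟨S, hS⟩ := exists_minimal_of_wellFoundedLT (IsWviSet G w k) h
  refine ⟨S, hS.prop, fun v hvS hred => ?_⟩
  exact hS.not_prop_of_ssubset (Set.sdiff_singleton_ssubset.2 hvS)
    (hS.prop.diff_singleton w hvS hred)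

/-- If a finite vertex-weighted graph has a `wvi(k)`-set, then it has an irredundant
`wvi(k)`-set. -/
theorem exists_irredundant_wviSet [Fintype V] (G : SimpleGraph V) (w : V → ℕ)
    (hw : ∀ v, 0 < w v) (k : ℕ) (hk : 0 < k)
    (h : ∃ S : Set V, IsWviSet G w k S) :
    ∃ S : Set V, IsWviSet G w k S ∧ Irredundant G S :=
  exists_irredundant_wviSet_general G w k h
end

section
/- For every finite connected simple graph G with at least two vertices, the number of vertices of G of degree at least 3 is at most 12·ml(G) + 32. -/
/-!
Fix a spanning tree `T` of `G` with the maximum number of leaves and let `S` be its vertices of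
`T`-degree `≠ 2`. A vertex of `G`-degree `≥ 3` outside `S` has `T`-degree `2` and a non-tree edge
`vu`. Let `v, x, y, …` be the tree path from `v` to `u`. If `x` and `y` both had degree `2`,
exchanging the tree edge `xy` for `vu` would give a spanning tree with more leaves: `x` becomes a
leaf, so does `y` unless `y = u`, and only `u` can stop being one. So `x` or `y` lies in `S`, and
`v` is within two steps of `S` through a vertex of degree `2`; a vertex `s ∈ S` has at most
`2 deg s` such vertices nearby. In a tree, `∑_{s ∈ S} deg s = 2|S| - 2` and `|S| ≤ 2 ml(G) - 2`, so
at most `|S| + 2 (2|S| - 2) ≤ 10 ml(G)` vertices have degree `≥ 3`.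
-/

open SimpleGraph

variable {V : Type*}

/-- The number of leaves (degree-1 vertices) of a graph. -/
noncomputable def numLeaves (T : SimpleGraph V) : ℕ :=
  {v | (T.neighborSet v).ncard = 1}.ncard

/-- The max-leaf number of `G`: the maximum number of leaves over all spanning trees of `G`
(a spanning tree is a subgraph of `G` on the full vertex set that is a tree). -/
noncomputable def ml (G : SimpleGraph V) : ℕ :=
  sSup {n | ∃ T : SimpleGraph V, T ≤ G ∧ T.IsTree ∧ n = numLeaves T}

namespace SimpleGraph

open Finset

variable {G T : SimpleGraph V} {u v w x y : V}

theorem IsTree.not_reachable_deleteEdges_of_mem_edges (hT : T.IsTree) {p : T.Walk u v}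
    (hp : p.IsPath) (he : s(x, y) ∈ p.edges) : ¬(T.deleteEdges {s(x, y)}).Reachable u v := by
  classical
  intro hr
  obtain ⟨q, hq⟩ := reachable_deleteEdges_iff_exists_walk.mp hr
  have hpq : (⟨p, hp⟩ : T.Path u v) = q.toPath := (hT.isAcyclic.subsingleton_path u v).elim _ _
  exact hq (q.edges_toPath_subset_edges (congrArg Subtype.val hpq ▸ he))

theorem IsTree.deleteEdges_sup_edge_of_not_reachable (hT : T.IsTree) (huv : ¬T.Adj u v)
    (hsep : ¬(T.deleteEdges {s(x, y)}).Reachable u v) :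
    (T.deleteEdges {s(x, y)} ⊔ edge u v).IsTree := by
  refine ⟨?_, (hT.isAcyclic.anti (deleteEdges_le _)).sup_edge_of_not_reachable hsep⟩
  have hne : u ≠ v := fun h => hsep (h ▸ Reachable.refl u)
  obtain ⟨p, hp⟩ := hT.connected.exists_isPath v u
  have hxy : s(x, y) ∈ p.edges := by
    simpa using p.reverse.mem_edges_of_not_reachable_deleteEdges hsep
  -- `xy` lies on the cycle closed by `uv`, so it is not a bridge of `T ⊔ edge u v`.
  let c : (T ⊔ edge u v).Walk u u :=
    .cons (Or.inr (by simp [edge_adj, hne])) (p.mapLe le_sup_left)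
  have hc : c.IsCycle := by
    refine (Walk.cons_isCycle_iff _ _).mpr ⟨hp.mapLe _, fun h => huv ?_⟩
    rw [Walk.edges_mapLe_eq_edges] at h
    exact p.adj_of_mem_edges h
  have hnb : ¬(T ⊔ edge u v).IsBridge s(x, y) := fun hb =>
    hb.notMem_edges_of_isCycle hc (by simp [c, hxy])
  have hedge : (edge u v).deleteEdges {s(x, y)} = edge u v := by
    have huv_ne_xy : s(u, v) ≠ s(x, y) := fun h => huv (p.adj_of_mem_edges (h ▸ hxy))
    simp only [deleteEdges_eq_self, edgeSet_edge, Set.disjoint_singleton_right, Set.mem_sdiff,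
      Set.mem_singleton_iff]
    exact fun h => huv_ne_xy h.1.symm
  simpa [hedge] using (hT.connected.mono le_sup_left).connected_delete_edge_of_not_isBridge hnb

theorem neighborSet_deleteEdges_sup_edge_of_ne (hwx : w ≠ x) (hwy : w ≠ y) (hwu : w ≠ u)
    (hwv : w ≠ v) : (T.deleteEdges {s(x, y)} ⊔ edge u v).neighborSet w = T.neighborSet w := by
  ext z
  simp [edge_adj]
  tauto

theorem neighborSet_deleteEdges_sup_edge_left (hxu : x ≠ u) (hxv : x ≠ v) :
    (T.deleteEdges {s(x, y)} ⊔ edge u v).neighborSet x = T.neighborSet x \ {y} := by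
  ext z
  have : T.Adj x z → x ≠ z := Adj.ne
  simp [edge_adj]
  tauto

theorem numLeaves_lt_numLeaves_deleteEdges_sup_edge [Finite V] (hxy : T.Adj x y) (hxu : x ≠ u)
    (hxv : x ≠ v) (hyv : y ≠ v) (hx : (T.neighborSet x).ncard = 2)
    (hy : (T.neighborSet y).ncard = 2) (hv : (T.neighborSet v).ncard = 2) :
    numLeaves T < numLeaves (T.deleteEdges {s(x, y)} ⊔ edge v u) := by
  set L := {w | (T.neighborSet w).ncard = 1}
  have hyL : y ∉ L := by simp only [L, Set.mem_ofPred_eq, hy]; omega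
  have hxL : x ∉ insert y L \ {u} := by
    rintro ⟨rfl | hxL, -⟩
    · exact hxy.ne rfl
    · simp only [L, Set.mem_ofPred_eq, hx] at hxL; omega
  -- `x` becomes a leaf, so does `y` unless `y = u`, and only `u` can stop being one.
  have hsub : insert x (insert y L \ {u}) ⊆
      {w | ((T.deleteEdges {s(x, y)} ⊔ edge v u).neighborSet w).ncard = 1} := by
    rintro w (hw | ⟨hw | hwL, hwu⟩)
    · subst w
      rw [Set.mem_ofPred_eq, neighborSet_deleteEdges_sup_edge_left hxv hxu,
        Set.ncard_sdiff_singleton_of_mem (show y ∈ T.neighborSet x from hxy), hx]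
    · subst w
      rw [Set.mem_ofPred_eq, Sym2.eq_swap, neighborSet_deleteEdges_sup_edge_left hyv hwu,
        Set.ncard_sdiff_singleton_of_mem (show x ∈ T.neighborSet y from hxy.symm), hy]
    · have hne (z : V) (hz : (T.neighborSet z).ncard = 2) : w ≠ z := by
        rintro rfl
        simp only [L, Set.mem_ofPred_eq, hz] at hwL
        omega
      rw [Set.mem_ofPred_eq,
        neighborSet_deleteEdges_sup_edge_of_ne (hne x hx) (hne y hy) (hne v hv) hwu]
      exact hwL
  calc L.ncard < (insert x (insert y L \ {u})).ncard := by
        have := Set.pred_ncard_le_ncard_sdiff_singleton (insert y L) u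
        rw [Set.ncard_insert_of_notMem hxL]
        rw [Set.ncard_insert_of_notMem hyL] at this
        omega
    _ ≤ _ := Set.ncard_le_ncard hsub

section Counting

variable [Fintype V] [DecidableRel T.Adj]

theorem ncard_neighborSet_eq_degree (v : V) : (T.neighborSet v).ncard = T.degree v := by
  rw [Set.ncard_eq_toFinset_card', ← card_neighborFinset_eq_degree, neighborFinset]

theorem numLeaves_eq_card_degree_eq_one : numLeaves T = #{w | T.degree w = 1} := by
  rw [numLeaves, ← Set.ncard_coe_finset]
  congr
  ext w
  simp [ncard_neighborSet_eq_degree]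

def nearFinset [DecidableEq V] (T : SimpleGraph V) [DecidableRel T.Adj] (s : V) : Finset V :=
  (T.neighborFinset s).biUnion fun x =>
    if T.degree x = 2 then insert x ((T.neighborFinset x).erase s) else {x}

theorem card_nearFinset_le [DecidableEq V] (s : V) : #(T.nearFinset s) ≤ 2 * T.degree s := by
  rw [nearFinset, ← card_neighborFinset_eq_degree, mul_comm, ← smul_eq_mul, ← sum_const]
  refine card_biUnion_le.trans (sum_le_sum fun x hx => ?_)
  split_ifs with hx2
  · refine (card_insert_le _ _).trans ?_
    rw [card_erase_of_mem (by simpa [adj_comm] using hx), card_neighborFinset_eq_degree, hx2]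
  · simp

theorem IsTree.sum_degree_ne_two_add_two (hT : T.IsTree) :
    ∑ w with T.degree w ≠ 2, T.degree w + 2 = 2 * #{w | T.degree w ≠ 2} := by
  have hedges := hT.card_edgeFinset
  have hsplit : ∑ w with T.degree w = 2, T.degree w + ∑ w with T.degree w ≠ 2, T.degree w =
      ∑ w, T.degree w := sum_filter_add_sum_filter_not _ _ _
  have hcard : #{w | T.degree w = 2} + #{w | T.degree w ≠ 2} = Fintype.card V :=
    card_filter_add_card_filter_not _
  rw [sum_congr rfl fun w hw => (mem_filter.mp hw).2, sum_const, smul_eq_mul,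
    T.sum_degrees_eq_twice_card_edges] at hsplit
  omega

theorem IsTree.card_degree_ne_two_add_two_le [Nontrivial V] (hT : T.IsTree) :
    #{w | T.degree w ≠ 2} + 2 ≤ 2 * #{w | T.degree w = 1} := by
  have hpos (w : V) : 0 < T.degree w :=
    hT.connected.preconnected.minDegree_pos_of_nontrivial.trans_le (T.minDegree_le_degree w)
  have hsum := hT.sum_degree_ne_two_add_two
  set S : Finset V := {w | T.degree w ≠ 2}
  have hleaves : S.filter (T.degree · = 1) = univ.filter (T.degree · = 1) := by
    ext w
    simp only [S, mem_filter, mem_univ, true_and]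
    omega
  have hbranch :
      3 * #(S.filter (T.degree · ≠ 1)) ≤ ∑ w ∈ S with T.degree w ≠ 1, T.degree w := by
    rw [mul_comm, ← smul_eq_mul, ← sum_const]
    refine sum_le_sum fun w hw => ?_
    simp only [S, mem_filter, mem_univ, true_and] at hw
    have := hpos w
    omega
  have hcard : #(S.filter (T.degree · = 1)) + #(S.filter (T.degree · ≠ 1)) = #S :=
    card_filter_add_card_filter_not _
  have hsplit : ∑ w ∈ S with T.degree w = 1, T.degree w +
      ∑ w ∈ S with T.degree w ≠ 1, T.degree w = ∑ w ∈ S, T.degree w :=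
    sum_filter_add_sum_filter_not _ _ _
  rw [sum_congr rfl fun w hw => (mem_filter.mp hw).2, sum_const, smul_eq_mul, mul_one] at hsplit
  rw [hleaves] at hcard hsplit
  omega

end Counting

structure IsMaxLeafSpanningTree (G T : SimpleGraph V) : Prop where
  le : T ≤ G
  isTree : T.IsTree
  numLeaves_le : ∀ T' ≤ G, T'.IsTree → numLeaves T' ≤ numLeaves T

theorem Connected.exists_isMaxLeafSpanningTree [Finite V] (hG : G.Connected) :
    ∃ T, G.IsMaxLeafSpanningTree T := by
  obtain ⟨T, ⟨hTG, hT⟩, hmax⟩ :=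
    Set.exists_max_image {T | T ≤ G ∧ T.IsTree} numLeaves (Set.toFinite _) hG.exists_isTree_le
  exact ⟨T, hTG, hT, fun T' hT'G hT' => hmax T' ⟨hT'G, hT'⟩⟩

namespace IsMaxLeafSpanningTree

theorem ml_eq [Finite V] (hT : G.IsMaxLeafSpanningTree T) : ml G = numLeaves T := by
  refine le_antisymm (csSup_le ⟨_, T, hT.le, hT.isTree, rfl⟩ ?_)
    (le_csSup ?_ ⟨T, hT.le, hT.isTree, rfl⟩)
  · rintro _ ⟨T', hT'G, hT', rfl⟩
    exact hT.numLeaves_le T' hT'G hT'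
  · exact ⟨Nat.card V, by rintro _ ⟨T', -, -, rfl⟩; exact Set.ncard_le_card _⟩

variable [Fintype V] [DecidableEq V] [DecidableRel T.Adj]

theorem exists_mem_nearFinset (hT : G.IsMaxLeafSpanningTree T) (hGvu : G.Adj v u)
    (hTvu : ¬T.Adj v u) (hv : T.degree v = 2) : ∃ s, T.degree s ≠ 2 ∧ v ∈ T.nearFinset s := by
  obtain ⟨p, hp⟩ := hT.isTree.connected.exists_isPath v u
  cases p with
  | nil => exact absurd rfl hGvu.ne
  | @cons _ x _ hvx p =>
  cases p with
  | nil => exact absurd hvx hTvu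
  | @cons _ y _ hxy q =>
  by_cases hx : T.degree x = 2
  swap
  · exact ⟨x, hx, mem_biUnion.mpr ⟨v, by simpa [adj_comm] using hvx, by simp [hv]⟩⟩
  by_cases hy : T.degree y = 2
  swap
  · refine ⟨y, hy, mem_biUnion.mpr ⟨x, by simpa [adj_comm] using hxy, ?_⟩⟩
    have hvy : v ≠ y := fun h => hy (h ▸ hv)
    simp [hx, hvx.symm, hvy]
  exfalso
  have hyv : y ≠ v := by
    rintro rfl
    exact ((Walk.cons_isPath_iff _ _).mp hp).2 (by simp)
  have hxu : x ≠ u := by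
    rintro rfl
    exact hTvu hvx
  have hT' := hT.isTree.deleteEdges_sup_edge_of_not_reachable hTvu
    (hT.isTree.not_reachable_deleteEdges_of_mem_edges hp (by simp : s(x, y) ∈ _))
  have hT'G : T.deleteEdges {s(x, y)} ⊔ edge v u ≤ G :=
    sup_le ((deleteEdges_le _).trans hT.le) ((edge_le_iff G).mpr (.inr hGvu))
  simp only [← ncard_neighborSet_eq_degree] at hx hy hv
  exact (hT.numLeaves_le _ hT'G hT').not_gt
    (numLeaves_lt_numLeaves_deleteEdges_sup_edge hxy hxu hvx.ne.symm hyv hx hy hv)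

theorem card_highDegree_le [Nontrivial V] (hT : G.IsMaxLeafSpanningTree T) :
    {v | 3 ≤ (G.neighborSet v).ncard}.ncard ≤ 10 * numLeaves T := by
  have hsum := hT.isTree.sum_degree_ne_two_add_two
  have hS := hT.isTree.card_degree_ne_two_add_two_le
  set S : Finset V := {w | T.degree w ≠ 2}
  have hsub : {v | 3 ≤ (G.neighborSet v).ncard} ⊆ ↑(S ∪ S.biUnion T.nearFinset) := by
    intro v (hv : 3 ≤ (G.neighborSet v).ncard)
    by_cases hv2 : T.degree v = 2
    · obtain ⟨u, hGvu, hTvu⟩ : ∃ u, G.Adj v u ∧ ¬T.Adj v u := by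
        by_contra! h
        have := Set.ncard_le_ncard (show G.neighborSet v ⊆ T.neighborSet v from h)
        rw [ncard_neighborSet_eq_degree (T := T), hv2] at this
        omega
      simpa [S] using Or.inr (hT.exists_mem_nearFinset hGvu hTvu hv2)
    · simp [S, hv2]
  have hnear : #(S.biUnion T.nearFinset) ≤ 2 * ∑ s ∈ S, T.degree s := by
    rw [mul_sum]
    exact card_biUnion_le.trans (sum_le_sum fun s _ => card_nearFinset_le s)
  rw [numLeaves_eq_card_degree_eq_one]
  calc _ ≤ (↑(S ∪ S.biUnion T.nearFinset) : Set V).ncard := Set.ncard_le_ncard hsub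
    _ = #(S ∪ S.biUnion T.nearFinset) := Set.ncard_coe_finset _
    _ ≤ #S + #(S.biUnion T.nearFinset) := card_union_le _ _
    _ ≤ _ := by omega

end IsMaxLeafSpanningTree

end SimpleGraph

/-- In a finite connected graph with at least two vertices, the number of vertices of degree
at least 3 is at most `12 · ml(G) + 32`. -/
theorem card_highDegree_le_ml [Fintype V] (G : SimpleGraph V) (hG : G.Connected)
    (h2 : 1 < Fintype.card V) :
    {v | 3 ≤ (G.neighborSet v).ncard}.ncard ≤ 12 * ml G + 32 := by
  classical
  have : Nontrivial V := Fintype.one_lt_card_iff_nontrivial.mp h2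
  obtain ⟨T, hT⟩ := hG.exists_isMaxLeafSpanningTree
  have := hT.card_highDegree_le
  rw [hT.ml_eq]
  omega
end

section
/- Let G be a finite connected simple graph with at least two vertices, and let G' be the graph obtained from G by adding a single new edge between two distinct non-adjacent vertices of G. Then ml(G') ≤ ml(G) + 2. -/
/-!
Let `T` be a spanning tree of `G + uv`. If `T` avoids `uv` it is a spanning tree of `G`.
Otherwise `T - uv` has two components, one containing `u` and one containing `v`, and since `G`
is connected some edge `ab` of `G` joins them, so `T' = T - uv + ab` is a spanning tree of `G`.
Every vertex other than `a` and `b` has at least one `T'`-neighbour and no more `T'`-neighbours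
than `T`-neighbours, so every leaf of `T` other than `a`, `b` is a leaf of `T'`.
-/

open SimpleGraph

variable {V : Type*}

namespace SimpleGraph

variable {G T : SimpleGraph V} {u v : V}

lemma Preconnected.exists_adj_of_mem_of_notMem (hG : G.Preconnected) {S : Set V} {x y : V}
    (hx : x ∈ S) (hy : y ∉ S) : ∃ a ∈ S, ∃ b ∉ S, G.Adj a b := by
  obtain ⟨p⟩ := hG x y
  obtain ⟨d, -, hd, hd'⟩ := p.exists_boundary_dart S hx hy
  exact ⟨_, hd, _, hd', d.adj⟩

lemma Preconnected.reachable_or_reachable_deleteEdges (hT : T.Preconnected) (u v x : V) :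
    (T.deleteEdges {s(u, v)}).Reachable u x ∨ (T.deleteEdges {s(u, v)}).Reachable v x := by
  set D := T.deleteEdges {s(u, v)}
  by_contra hx
  obtain ⟨a, ha, b, hb, hab⟩ := hT.exists_adj_of_mem_of_notMem
    (S := {x | D.Reachable u x ∨ D.Reachable v x}) (Or.inl .rfl) hx
  by_cases he : s(a, b) = s(u, v)
  · rcases Sym2.eq_iff.mp he with ⟨-, rfl⟩ | ⟨-, rfl⟩
    exacts [hb (Or.inr .rfl), hb (Or.inl .rfl)]
  · have hD : D.Adj a b := deleteEdges_adj.mpr ⟨hab, he⟩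
    exact hb (ha.imp (·.trans hD.reachable) (·.trans hD.reachable))

lemma deleteEdges_le_of_le_sup_edge (h : T ≤ G ⊔ edge u v) : T.deleteEdges {s(u, v)} ≤ G := by
  rw [← sup_comm] at h
  exact sdiff_le_iff.mpr h

/-- Removing an edge of a tree leaves two components, and a connected graph has an edge
between them. -/
theorem IsTree.exists_isTree_deleteEdges_sup_edge (hT : T.IsTree) (hG : G.Connected)
    (huv : T.Adj u v) : ∃ a b, G.Adj a b ∧ (T.deleteEdges {s(u, v)} ⊔ edge a b).IsTree := by
  set D := T.deleteEdges {s(u, v)}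
  have hD : ¬ D.Reachable u v := isAcyclic_iff_forall_adj_isBridge.mp hT.isAcyclic huv
  obtain ⟨a, ha, b, hb, hab⟩ := hG.preconnected.exists_adj_of_mem_of_notMem
    (S := {x | D.Reachable u x}) .rfl hD
  have hvb : D.Reachable v b :=
    (hT.preconnected.reachable_or_reachable_deleteEdges u v b).resolve_left hb
  refine ⟨a, b, hab, ?_, ?_⟩
  · have hab' : (D ⊔ edge a b).Adj a b :=
      Or.inr ((edge_adj a b a b).mpr ⟨Or.inl ⟨rfl, rfl⟩, hab.ne⟩)
    refine (connected_iff_exists_forall_reachable _).mpr ⟨u, fun x => ?_⟩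
    rcases hT.preconnected.reachable_or_reachable_deleteEdges u v x with hx | hx
    · exact hx.mono le_sup_left
    · exact ((ha.mono le_sup_left).trans hab'.reachable).trans
        ((hvb.symm.trans hx).mono le_sup_left)
  · exact (hT.isAcyclic.anti (deleteEdges_le _)).sup_edge_of_not_reachable fun h => hb (ha.trans h)

end SimpleGraph

lemma numLeaves_le_numLeaves_add_ncard [Finite V] {T T' : SimpleGraph V} {s : Set V}
    (hne : ∀ w ∉ s, (T'.neighborSet w).Nonempty)
    (hsub : ∀ w ∉ s, T'.neighborSet w ⊆ T.neighborSet w) :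
    numLeaves T ≤ numLeaves T' + s.ncard := by
  have hleaves : {w | (T.neighborSet w).ncard = 1} ⊆ {w | (T'.neighborSet w).ncard = 1} ∪ s := by
    intro w hw
    by_cases hws : w ∈ s
    · exact Or.inr hws
    obtain ⟨z, hz⟩ := Set.ncard_eq_one.mp hw
    refine Or.inl ?_
    rw [Set.mem_ofPred_eq, (hne w hws).subset_singleton_iff.mp (hz ▸ hsub w hws),
      Set.ncard_singleton]
  exact (Set.ncard_le_ncard hleaves).trans (Set.ncard_union_le _ _)

lemma numLeaves_le_numLeaves_sup_edge_add_two [Finite V] [Nontrivial V] {T D : SimpleGraph V}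
    {a b : V} (hD : D ≤ T) (hconn : (D ⊔ edge a b).Connected) :
    numLeaves T ≤ numLeaves (D ⊔ edge a b) + 2 := by
  refine (numLeaves_le_numLeaves_add_ncard (T' := D ⊔ edge a b) (s := {a, b})
    (fun w _ => hconn.preconnected.exists_adj_of_nontrivial w) fun w hw z hz => ?_).trans ?_
  · rcases hz with hz | hz
    · exact hD hz
    · simp only [Set.mem_insert_iff, Set.mem_singleton_iff, not_or] at hw
      grind
  · have : ({a, b} : Set V).ncard ≤ 2 := (Set.ncard_insert_le a {b}).trans (by simp)
    omega

lemma numLeaves_le_ml [Finite V] {G T : SimpleGraph V} (hTG : T ≤ G) (hT : T.IsTree) :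
    numLeaves T ≤ ml G :=
  le_csSup ⟨Nat.card V, by rintro _ ⟨T, -, -, rfl⟩; exact Set.ncard_le_card _⟩ ⟨T, hTG, hT, rfl⟩

lemma ml_le_of_forall {G : SimpleGraph V} {n : ℕ}
    (h : ∀ T ≤ G, T.IsTree → numLeaves T ≤ n) : ml G ≤ n :=
  csSup_le' (by rintro _ ⟨T, hTG, hT, rfl⟩; exact h T hTG hT)

theorem ml_addEdge_le_general [Fintype V] (G : SimpleGraph V) (hG : G.Connected) (u v : V) :
    ml (G ⊔ SimpleGraph.fromEdgeSet {s(u, v)}) ≤ ml G + 2 := by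
  refine ml_le_of_forall fun T (hTle : T ≤ G ⊔ edge u v) hT => ?_
  by_cases huv : T.Adj u v
  · have := nontrivial_of_ne u v huv.ne
    obtain ⟨a, b, hab, hT'⟩ := hT.exists_isTree_deleteEdges_sup_edge hG huv
    have hT'G : T.deleteEdges {s(u, v)} ⊔ edge a b ≤ G :=
      sup_le (deleteEdges_le_of_le_sup_edge hTle) ((edge_le_iff G).mpr (Or.inr hab))
    calc numLeaves T ≤ numLeaves (T.deleteEdges {s(u, v)} ⊔ edge a b) + 2 :=
          numLeaves_le_numLeaves_sup_edge_add_two (deleteEdges_le _) hT'.connected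
      _ ≤ ml G + 2 := by grw [numLeaves_le_ml hT'G hT']
  · have hTG : T ≤ G := by
      rw [← sdiff_edge T huv]
      exact deleteEdges_le_of_le_sup_edge hTle
    exact (numLeaves_le_ml hTG hT).trans (Nat.le_add_right _ _)

/-- Adding a single edge between two distinct non-adjacent vertices of a finite connected
graph with at least two vertices increases the max-leaf number by at most 2. -/
theorem ml_addEdge_le [Fintype V] [DecidableEq V] (G : SimpleGraph V) (hG : G.Connected)
    (h2 : 1 < Fintype.card V) (u v : V) (huv : u ≠ v) (hadj : ¬ G.Adj u v) :
    ml (G ⊔ SimpleGraph.fromEdgeSet {s(u, v)}) ≤ ml G + 2 :=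
  ml_addEdge_le_general G hG u v
end

section
/- Let G be a finite simple graph and let X ⊆ V(G) be a set of vertices such that every vertex of V(G) ∖ X has degree at most 2 in G. For all positive integers ℓ and p, if there exists a set S ⊆ V(G) with |S| ≤ p such that every connected component of G − S has at most ℓ vertices, then there exists such a set S that additionally satisfies the following property: for every cycle of G whose vertex set C satisfies C ∩ X ≠ ∅, either C ∩ S = ∅ or C ∩ X ∩ S ≠ ∅. -/
open SimpleGraph

variable {V : Type*}

section Avoid

variable {G : SimpleGraph V}

/-- Connection by a walk avoiding a set `S`. -/
def Avoid (G : SimpleGraph V) (S : Set V) (u v : V) : Prop :=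
  ∃ w : G.Walk u v, ∀ z ∈ w.support, z ∉ S

namespace Avoid

lemma not_left {S : Set V} {u v : V} (h : Avoid G S u v) : u ∉ S :=
  h.choose_spec u h.choose.start_mem_support

lemma not_right {S : Set V} {u v : V} (h : Avoid G S u v) : v ∉ S :=
  h.choose_spec v h.choose.end_mem_support

lemma refl {S : Set V} {u : V} (hu : u ∉ S) : Avoid G S u u :=
  ⟨Walk.nil, by simp [hu]⟩

lemma symm {S : Set V} {u v : V} (h : Avoid G S u v) : Avoid G S v u := by
  obtain ⟨w, hw⟩ := h
  exact ⟨w.reverse, by simpa using hw⟩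

lemma trans {S : Set V} {u v z : V} (h : Avoid G S u v) (h' : Avoid G S v z) :
    Avoid G S u z := by
  obtain ⟨w, hw⟩ := h
  obtain ⟨w', hw'⟩ := h'
  refine ⟨w.append w', fun a ha => ?_⟩
  rw [Walk.mem_support_append_iff] at ha
  exact ha.elim (hw a) (hw' a)

lemma of_adj {S : Set V} {u v : V} (h : G.Adj u v) (hu : u ∉ S) (hv : v ∉ S) :
    Avoid G S u v :=
  ⟨Walk.cons h Walk.nil, by simp [hu, hv]⟩

end Avoid

lemma avoid_to_reach {S : Set V} {a b : V} (w : G.Walk a b)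
    (hw : ∀ z ∈ w.support, z ∉ S) (ha : a ∈ (Sᶜ : Set V)) (hb : b ∈ (Sᶜ : Set V)) :
    (G.induce Sᶜ).Reachable ⟨a, ha⟩ ⟨b, hb⟩ := by
  induction w with
  | nil => exact Reachable.refl _
  | @cons a c b h w ih =>
    have hc : c ∈ (Sᶜ : Set V) := hw c (by simp)
    have h1 : (G.induce Sᶜ).Adj ⟨a, ha⟩ ⟨c, hc⟩ := by
      simp only [comap_adj, Function.Embedding.coe_subtype]
      exact h
    exact (h1.reachable).trans (ih (fun z hz => hw z (by simp [hz])) hc hb)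

lemma reach_to_avoid {S : Set V} (u v : ↥(Sᶜ : Set V)) (h : (G.induce Sᶜ).Reachable u v) :
    Avoid G S u.val v.val := by
  obtain ⟨w⟩ := h
  induction w with
  | @nil z => exact Avoid.refl ((Set.mem_compl_iff _ _).mp z.prop)
  | @cons a b c h w ih =>
    have h' : G.Adj a.val b.val := h
    exact (Avoid.of_adj h' ((Set.mem_compl_iff _ _).mp a.prop)
      ((Set.mem_compl_iff _ _).mp b.prop)).trans ih

lemma mem_ccSets {S D : Set V} :
    D ∈ ccSets G S ↔ ∃ u, u ∉ S ∧ D = {v | Avoid G S u v} := by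
  constructor
  · rintro ⟨cc, rfl⟩
    obtain ⟨u, hu⟩ := cc.exists_rep
    refine ⟨u.val, (Set.mem_compl_iff _ _).mp u.prop, ?_⟩
    ext v
    simp only [Set.mem_image, Set.mem_setOf_eq]
    constructor
    · rintro ⟨w, hw, rfl⟩
      rw [ConnectedComponent.mem_supp_iff, ← hu] at hw
      exact (reach_to_avoid _ _ (ConnectedComponent.eq.mp hw)).symm
    · intro hav
      have hv : v ∈ (Sᶜ : Set V) := (Set.mem_compl_iff _ _).mpr hav.not_right
      refine ⟨⟨v, hv⟩, ?_, rfl⟩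
      rw [ConnectedComponent.mem_supp_iff, ← hu]
      obtain ⟨w, hw⟩ := hav.symm
      exact ConnectedComponent.eq.mpr (avoid_to_reach w hw hv u.prop)
  · rintro ⟨u, hu, rfl⟩
    have hu' : u ∈ (Sᶜ : Set V) := (Set.mem_compl_iff _ _).mpr hu
    refine ⟨(G.induce Sᶜ).connectedComponentMk ⟨u, hu'⟩, ?_⟩
    ext v
    simp only [Set.mem_image, Set.mem_setOf_eq]
    constructor
    · intro hav
      have hv : v ∈ (Sᶜ : Set V) := (Set.mem_compl_iff _ _).mpr hav.not_right
      refine ⟨⟨v, hv⟩, ?_, rfl⟩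
      rw [ConnectedComponent.mem_supp_iff, ConnectedComponent.eq]
      obtain ⟨w, hw⟩ := hav.symm
      exact avoid_to_reach w hw hv hu'
    · rintro ⟨w, hw, rfl⟩
      rw [ConnectedComponent.mem_supp_iff, ConnectedComponent.eq] at hw
      exact (reach_to_avoid _ _ hw).symm

lemma comp_bound [Finite V] {S S' : Set V} {ψ : V → V} (hinj : Function.Injective ψ)
    (hψ : ∀ u, u ∉ S' → ψ u ∉ S)
    (hedge : ∀ u v, u ∉ S' → v ∉ S' → G.Adj u v → Avoid G S (ψ u) (ψ v))
    {ℓ : ℕ} (hold : ∀ D ∈ ccSets G S, D.ncard ≤ ℓ) :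
    ∀ D ∈ ccSets G S', D.ncard ≤ ℓ := by
  have key : ∀ {a b : V} (w : G.Walk a b), (∀ z ∈ w.support, z ∉ S') →
      Avoid G S (ψ a) (ψ b) := by
    intro a b w
    induction w with
    | nil => intro hw; exact Avoid.refl (hψ _ (hw _ (by simp)))
    | @cons a c b h w ih =>
      intro hw
      exact (hedge a c (hw _ (by simp)) (hw _ (by simp)) h).trans
        (ih (fun z hz => hw z (by simp [hz])))
  intro D hD
  rw [mem_ccSets] at hD
  obtain ⟨u, hu, rfl⟩ := hD
  have hsub : ψ '' {v | Avoid G S' u v} ⊆ {v | Avoid G S (ψ u) v} := by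
    rintro _ ⟨v, hv, rfl⟩
    obtain ⟨w, hw⟩ := hv
    exact key w hw
  calc {v | Avoid G S' u v}.ncard = (ψ '' {v | Avoid G S' u v}).ncard :=
        (Set.ncard_image_of_injective _ hinj).symm
    _ ≤ {v | Avoid G S (ψ u) v}.ncard := Set.ncard_le_ncard hsub (Set.toFinite _)
    _ ≤ ℓ := hold _ (mem_ccSets.mpr ⟨ψ u, hψ u hu, rfl⟩)

end Avoid

section GetVert

variable {G : SimpleGraph V}

lemma getVert_eq_getElem {u v : V} (p : G.Walk u v) : ∀ (i : ℕ) (h : i < p.support.length),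
    p.getVert i = p.support[i] := by
  induction p with
  | nil =>
    intro i h
    simp only [Walk.support_nil, List.length_singleton] at h
    interval_cases i
    simp [Walk.getVert_zero]
  | cons h q ih =>
    intro i hi
    cases i with
    | zero => simp [Walk.getVert_zero]
    | succ i =>
      rw [Walk.getVert_cons_succ]
      simp only [Walk.support_cons, List.getElem_cons_succ]
      exact ih i (by
        simp only [Walk.support_cons, List.length_cons] at hi
        omega)

lemma cycle_getVert_inj {x : V} {c : G.Walk x x} (hc : c.IsCycle) {i j : ℕ}
    (hi : i < c.length) (hj : j < c.length) (h : c.getVert i = c.getVert j) : i = j := by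
  have hnd := hc.support_nodup
  have hlen : c.support.length = c.length + 1 := c.length_support
  have htl : c.support.tail.length = c.length := by
    rw [List.length_tail, hlen]; omega
  have key : ∀ (a : ℕ), a ≤ c.length → 1 ≤ a → ∀ (hb : a - 1 < c.support.tail.length),
      c.getVert a = c.support.tail[a-1]'hb := by
    intro a ha h1 hb
    rw [getVert_eq_getElem c a (by omega)]
    rw [List.getElem_tail]
    congr 1
    omega
  have h0 : c.getVert 0 = c.getVert c.length := by
    rw [Walk.getVert_zero, Walk.getVert_length]
  rcases Nat.eq_zero_or_pos i with hi0 | hi1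
  · rcases Nat.eq_zero_or_pos j with hj0 | hj1
    · omega
    · exfalso
      have heq : c.support.tail[c.length - 1]'(by omega) = c.support.tail[j-1]'(by omega) := by
        rw [← key c.length le_rfl (by omega) (by omega), ← key j (by omega) hj1 (by omega),
          ← h0, ← hi0, h]
      have := (hnd.getElem_inj_iff).mp heq
      omega
  · rcases Nat.eq_zero_or_pos j with hj0 | hj1
    · exfalso
      have heq : c.support.tail[i - 1]'(by omega) = c.support.tail[c.length-1]'(by omega) := by
        rw [← key c.length le_rfl (by omega) (by omega), ← key i (by omega) hi1 (by omega),
          ← h0, ← hj0, ← h]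
      have := (hnd.getElem_inj_iff).mp heq
      omega
    · have heq : c.support.tail[i - 1]'(by omega) = c.support.tail[j-1]'(by omega) := by
        rw [← key i (by omega) hi1 (by omega), ← key j (by omega) hj1 (by omega), h]
      have := (hnd.getElem_inj_iff).mp heq
      omega

end GetVert

lemma rotate_step [Fintype V] (G : SimpleGraph V) (X S : Set V)
    (hX : ∀ v ∉ X, (G.neighborSet v).ncard ≤ 2)
    {x : V} {c : G.Walk x x} (hcyc : c.IsCycle)
    (hC1 : ({v | v ∈ c.support} ∩ X).Nonempty)
    (hC2 : ({v | v ∈ c.support} ∩ S).Nonempty)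
    (hC3 : {v | v ∈ c.support} ∩ X ∩ S = ∅)
    {ℓ : ℕ} (hS2 : ∀ D ∈ ccSets G S, D.ncard ≤ ℓ) :
    ∃ S' : Set V, S'.ncard ≤ S.ncard ∧ (∀ D ∈ ccSets G S', D.ncard ≤ ℓ) ∧
      (S' \ X).ncard < (S \ X).ncard := by
  classical
  have hC3' : ∀ v, v ∈ c.support → v ∈ X → v ∉ S := by
    intro v h1 h2 h3
    have : v ∈ ({v | v ∈ c.support} ∩ X ∩ S) := ⟨⟨h1, h2⟩, h3⟩
    rw [hC3] at this
    exact this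
  set n := c.length with hn
  have hn3 : 3 ≤ n := hcyc.three_le_length
  set f : ℕ → V := fun k => c.getVert (k % n) with hf
  have hper : ∀ a b, a % n = b % n → f a = f b := by
    intro a b hab
    simp only [hf, hab]
  have hinj : ∀ a b, f a = f b → a % n = b % n := by
    intro a b hab
    exact cycle_getVert_inj hcyc (Nat.mod_lt _ (by omega)) (Nat.mod_lt _ (by omega)) hab
  have hadd : ∀ k t, f (k + n * t) = f k := by
    intro k t
    exact hper _ _ (Nat.add_mul_mod_self_left k n t)
  have hadj : ∀ k, G.Adj (f k) (f (k + 1)) := by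
    intro k
    have hk : k % n < n := Nat.mod_lt _ (by omega)
    have h1 : (k + 1) % n = (k % n + 1) % n := by
      conv_lhs => rw [Nat.add_mod]
      simp
    rcases Nat.lt_or_ge (k % n + 1) n with hlt | hge
    · have h2 : (k + 1) % n = k % n + 1 := by rw [h1, Nat.mod_eq_of_lt hlt]
      show G.Adj (c.getVert (k % n)) (c.getVert ((k + 1) % n))
      rw [h2]
      exact c.adj_getVert_succ hk
    · have hkn : k % n + 1 = n := by omega
      have h2 : (k + 1) % n = 0 := by rw [h1, hkn, Nat.mod_self]
      show G.Adj (c.getVert (k % n)) (c.getVert ((k + 1) % n))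
      rw [h2, Walk.getVert_zero]
      have h3 := c.adj_getVert_succ (show k % n < c.length by omega)
      rw [show k % n + 1 = c.length by omega, Walk.getVert_length] at h3
      exact h3
  have hmemf : ∀ k, f k ∈ c.support := by
    intro k
    exact Walk.mem_support_iff_exists_getVert.mpr ⟨k % n, rfl, by
      have := Nat.mod_lt k (show 0 < n by omega); omega⟩
  have hsurj : ∀ v, v ∈ c.support → ∃ k, f k = v := by
    intro v hv
    obtain ⟨a, ha1, ha2⟩ := Walk.mem_support_iff_exists_getVert.mp hv
    rcases Nat.lt_or_ge a n with h | h
    · exact ⟨a, by simp only [hf]; rw [Nat.mod_eq_of_lt h]; exact ha1⟩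
    · have ha : a = n := by omega
      refine ⟨0, ?_⟩
      simp only [hf, Nat.zero_mod, Walk.getVert_zero]
      rw [← ha1, ha]
      exact (Walk.getVert_length c).symm
  -- degree-two vertices have only the two cycle neighbours
  have hdeg : ∀ k w, f k ∉ X → G.Adj (f k) w → w = f (k + 1) ∨ w = f (k + (n - 1)) := by
    intro k w hkX hw
    by_contra hcon
    push_neg at hcon
    obtain ⟨h1, h2⟩ := hcon
    have hadjb : G.Adj (f k) (f (k + (n - 1))) := by
      have h3 := hadj (k + (n - 1))
      have h4 : f (k + (n - 1) + 1) = f k := by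
        rw [show k + (n - 1) + 1 = k + n * 1 by omega, hadd]
      rw [h4] at h3
      exact h3.symm
    have hne : f (k + 1) ≠ f (k + (n - 1)) := by
      intro he
      have hmod := hinj _ _ he
      have hmod' : Nat.ModEq n (k + 1) (k + 1 + (n - 2)) := by
        unfold Nat.ModEq
        rw [hmod]
        congr 1
        omega
      have hdvd := (Nat.modEq_iff_dvd' (by omega)).mp hmod'
      have : k + 1 + (n - 2) - (k + 1) = n - 2 := by omega
      rw [this] at hdvd
      have := Nat.le_of_dvd (by omega) hdvd
      omega
    have hsub : ({f (k + 1), f (k + (n - 1)), w} : Set V) ⊆ G.neighborSet (f k) := by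
      rintro z (rfl | rfl | rfl)
      · exact hadj k
      · exact hadjb
      · exact hw
    have hcard : ({f (k + 1), f (k + (n - 1)), w} : Set V).ncard = 3 := by
      rw [Set.ncard_insert_of_notMem (by simp [hne, Ne.symm h1]) (Set.toFinite _),
        Set.ncard_pair (Ne.symm h2)]
    have hle := Set.ncard_le_ncard hsub (Set.toFinite _)
    have := hX (f k) hkX
    omega
  -- the shift amount d
  obtain ⟨s0, hs0supp, hs0S⟩ := hC2
  obtain ⟨k₀', hk₀'⟩ := hsurj s0 hs0supp
  obtain ⟨x0, hx0supp, hx0X⟩ := hC1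
  obtain ⟨j₀, hj₀⟩ := hsurj x0 hx0supp
  have Hex : ∃ e, 1 ≤ e ∧ ∃ k, f k ∈ S ∧ f (k + e) ∈ X := by
    have hr : k₀' % n < n := Nat.mod_lt _ (by omega)
    refine ⟨j₀ % n + n - k₀' % n, by omega, k₀', by rw [hk₀']; exact hs0S, ?_⟩
    have hmod : (k₀' + (j₀ % n + n - k₀' % n)) % n = j₀ % n := by
      have step1 : Nat.ModEq n (k₀' + (j₀ % n + n - k₀' % n))
          (k₀' % n + (j₀ % n + n - k₀' % n)) :=
        Nat.ModEq.add_right _ (Nat.mod_modEq k₀' n).symm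
      have step2 : k₀' % n + (j₀ % n + n - k₀' % n) = j₀ % n + n := by omega
      have step3 : (j₀ % n + n) % n = j₀ % n % n := Nat.add_mod_right _ n
      calc (k₀' + (j₀ % n + n - k₀' % n)) % n
          = (k₀' % n + (j₀ % n + n - k₀' % n)) % n := step1
        _ = (j₀ % n + n) % n := by rw [step2]
        _ = j₀ % n % n := step3
        _ = j₀ % n := Nat.mod_mod_of_dvd _ dvd_rfl
    rw [hper _ _ hmod, hj₀]
    exact hx0X
  set d := Nat.find Hex with hd
  obtain ⟨hd1, k₀, hk₀S, hk₀X⟩ := Nat.find_spec Hex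
  have hmin : ∀ e, e < d → ¬(1 ≤ e ∧ ∃ k, f k ∈ S ∧ f (k + e) ∈ X) := by
    intro e he
    exact Nat.find_min Hex he
  have hdmod : d % n < n := Nat.mod_lt _ (by omega)
  have hdn : d % n ≠ 0 := by
    intro h0
    have heq : f (k₀ + d) = f k₀ := by
      apply hper
      conv_lhs => rw [Nat.add_mod, h0]
      simp
    exact hC3' (f k₀) (hmemf k₀) (heq ▸ hk₀X) hk₀S
  set m := n - d % n with hm
  have hdm : ∀ k, f (k + d + m) = f k := by
    intro k
    have h1 : k + d + m = k + n * (d / n + 1) := by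
      have h2 : n * (d / n + 1) = n * (d / n) + n := by ring
      have h3 := Nat.div_add_mod d n
      omega
    rw [h1, hadd]
  have hmd : ∀ k, f (k + m + d) = f k := by
    intro k
    rw [show k + m + d = k + d + m by omega, hdm]
  have hnmod : ∀ k, f (k + m + d % n) = f k := by
    intro k
    rw [show k + m + d % n = k + n * 1 by omega, hadd]
  -- the rotation map
  set ψ : V → V := fun v => if h : ∃ k, f k = v then f (h.choose + m) else v with hψ
  have hψf : ∀ k, ψ (f k) = f (k + m) := by
    intro k
    have hex : ∃ k', f k' = f k := ⟨k, rfl⟩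
    simp only [hψ, dif_pos hex]
    exact hper _ _ (Nat.ModEq.add_right m (hinj _ _ hex.choose_spec))
  have hψid : ∀ v, (¬∃ k, f k = v) → ψ v = v := by
    intro v hv
    simp only [hψ, dif_neg hv]
  have hψinj : Function.Injective ψ := by
    intro u v huv
    by_cases hu : ∃ k, f k = u <;> by_cases hv : ∃ k, f k = v
    · obtain ⟨ku, rfl⟩ := hu
      obtain ⟨kv, rfl⟩ := hv
      rw [hψf, hψf] at huv
      exact hper _ _ (Nat.ModEq.add_right_cancel' m (hinj _ _ huv))
    · exfalso
      obtain ⟨ku, rfl⟩ := hu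
      rw [hψf, hψid v hv] at huv
      exact hv ⟨_, huv⟩
    · exfalso
      obtain ⟨kv, rfl⟩ := hv
      rw [hψf, hψid u hu] at huv
      exact hu ⟨_, huv.symm⟩
    · rwa [hψid u hu, hψid v hv] at huv
  -- the rotated separator
  set S' : Set V := (S \ {v | v ∈ c.support}) ∪ {w | ∃ k, f k ∈ S ∧ f (k + d) = w} with hS'
  have hCiff : ∀ v, v ∈ c.support ↔ ∃ k, f k = v := by
    intro v
    exact ⟨hsurj v, by rintro ⟨k, rfl⟩; exact hmemf k⟩
  have hψS : ∀ w, ψ w ∈ S → w ∈ S' := by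
    intro w hw
    by_cases hex : ∃ k, f k = w
    · obtain ⟨k, rfl⟩ := hex
      rw [hψf] at hw
      exact Or.inr ⟨k + m, hw, hmd k⟩
    · rw [hψid w hex] at hw
      exact Or.inl ⟨hw, fun hc => hex (hsurj w hc)⟩
  have hψnotS : ∀ w, w ∉ S' → ψ w ∉ S := fun w hw hc => hw (hψS w hc)
  have hnotC_notS : ∀ w, w ∉ S' → (¬∃ k, f k = w) → w ∉ S := by
    intro w hw hex hS
    exact hw (Or.inl ⟨hS, fun hc => hex (hsurj w hc)⟩)
  have himg : ψ '' S' ⊆ S := by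
    rintro _ ⟨w, hw, rfl⟩
    rcases hw with ⟨hwS, hwC⟩ | ⟨k, hkS, rfl⟩
    · rwa [hψid w (fun hc => hwC (by rcases hc with ⟨k, rfl⟩; exact hmemf k))]
    · rw [hψf, hdm]
      exact hkS
  have hcard1 : S'.ncard ≤ S.ncard := by
    calc S'.ncard = (ψ '' S').ncard := (Set.ncard_image_of_injective _ hψinj).symm
      _ ≤ S.ncard := Set.ncard_le_ncard himg (Set.toFinite S)
  have hk₀notX : f k₀ ∉ X := fun hx => hC3' _ (hmemf k₀) hx hk₀S
  have himg2 : ψ '' (S' \ X) ⊆ (S \ X) \ {f k₀} := by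
    rintro _ ⟨w, ⟨hwS', hwX⟩, rfl⟩
    rcases hwS' with ⟨hwS, hwC⟩ | ⟨k, hkS, rfl⟩
    · have hid : ψ w = w := hψid w (fun hc => hwC (by rcases hc with ⟨k, rfl⟩; exact hmemf k))
      rw [hid]
      refine ⟨⟨hwS, hwX⟩, ?_⟩
      simp only [Set.mem_singleton_iff]
      intro hc
      exact hwC (hc ▸ hmemf k₀)
    · rw [hψf, hdm]
      refine ⟨⟨hkS, fun hx => hC3' _ (hmemf k) hx hkS⟩, ?_⟩
      simp only [Set.mem_singleton_iff]
      intro hc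
      have : f (k + d) = f (k₀ + d) := hper _ _ (Nat.ModEq.add_right d (hinj _ _ hc))
      exact hwX (this ▸ hk₀X)
  have hcard2 : (S' \ X).ncard < (S \ X).ncard := by
    have h1 : (S' \ X).ncard = (ψ '' (S' \ X)).ncard :=
      (Set.ncard_image_of_injective _ hψinj).symm
    have h2 : (ψ '' (S' \ X)).ncard ≤ ((S \ X) \ {f k₀}).ncard :=
      Set.ncard_le_ncard himg2 (Set.toFinite _)
    have h3 : ((S \ X) \ {f k₀}).ncard < (S \ X).ncard :=
      Set.ncard_diff_singleton_lt_of_mem ⟨hk₀S, hk₀notX⟩ (Set.toFinite _)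
    omega
  -- walking along a segment of the cycle
  have hseg : ∀ a len, (∀ j, j ≤ len → f (a + j) ∉ S) → Avoid G S (f a) (f (a + len)) := by
    intro a len
    induction len with
    | zero => intro hj; exact Avoid.refl (hj 0 le_rfl)
    | succ t ih =>
      intro hj
      exact (ih (fun j hjt => hj j (by omega))).trans
        (Avoid.of_adj (hadj (a + t)) (hj t (by omega)) (hj (t + 1) le_rfl))
  -- walking back from the rotated position to an X vertex of the cycle
  have hback : ∀ k, f k ∈ X → f k ∉ S' → Avoid G S (f (k + m)) (f k) := by
    intro k hkX hkS'
    have h1 : ∀ j, j ≤ d % n → f (k + m + j) ∉ S := by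
      intro j hj hmem
      rcases Nat.eq_zero_or_pos j with rfl | hj1
      · exact hkS' (Or.inr ⟨k + m, hmem, hmd k⟩)
      rcases eq_or_lt_of_le hj with rfl | hjlt
      · exact hC3' (f k) (hmemf k) hkX (hnmod k ▸ hmem)
      · have hmodle : d % n ≤ d := Nat.mod_le d n
        refine hmin (d % n - j) (by omega) ⟨by omega, k + m + j, hmem, ?_⟩
        rw [show k + m + j + (d % n - j) = k + m + d % n by omega, hnmod]
        exact hkX
    have h2 := hseg (k + m) (d % n) h1
    rwa [hnmod k] at h2
  -- the edge transfer property
  have heasy : ∀ k v, f k ∉ X → f k ∉ S' → v ∉ S' → G.Adj (f k) v →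
      Avoid G S (ψ (f k)) (ψ v) := by
    intro k v hkX hkS' hvS' hadj'
    have ha := hψnotS _ hkS'
    have hb := hψnotS _ hvS'
    rw [hψf] at ha
    rcases hdeg k v hkX hadj' with rfl | rfl
    · rw [hψf] at hb ⊢
      rw [hψf]
      refine Avoid.of_adj ?_ ha hb
      rw [show k + 1 + m = k + m + 1 by omega]
      exact hadj (k + m)
    · rw [hψf] at hb ⊢
      rw [hψf]
      refine Avoid.of_adj ?_ ha hb
      have h3 := hadj (k + (n - 1) + m)
      rw [show k + (n - 1) + m + 1 = k + m + n * 1 by omega, hadd] at h3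
      exact h3.symm
  have hedge : ∀ u v, u ∉ S' → v ∉ S' → G.Adj u v → Avoid G S (ψ u) (ψ v) := by
    intro u v hu hv huv
    by_cases hue : ∃ k, f k = u <;> by_cases hve : ∃ k, f k = v
    · obtain ⟨ku, rfl⟩ := hue
      obtain ⟨kv, rfl⟩ := hve
      by_cases hX1 : f ku ∈ X
      · by_cases hX2 : f kv ∈ X
        · have h1 := hback ku hX1 hu
          have h2 := hback kv hX2 hv
          have hu0 : f ku ∉ S := hC3' _ (hmemf ku) hX1
          have hv0 : f kv ∉ S := hC3' _ (hmemf kv) hX2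
          rw [hψf, hψf]
          exact (h1.trans (Avoid.of_adj huv hu0 hv0)).trans h2.symm
        · exact (heasy kv (f ku) hX2 hv hu huv.symm).symm
      · exact heasy ku (f kv) hX1 hu hv huv
    · obtain ⟨ku, rfl⟩ := hue
      have hXu : f ku ∈ X := by
        by_contra hXu
        rcases hdeg ku v hXu huv with rfl | rfl
        · exact hve ⟨ku + 1, rfl⟩
        · exact hve ⟨ku + (n - 1), rfl⟩
      have h1 := hback ku hXu hu
      have hu0 : f ku ∉ S := hC3' _ (hmemf ku) hXu
      have hv0 : v ∉ S := hnotC_notS v hv hve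
      rw [hψf, hψid v hve]
      exact h1.trans (Avoid.of_adj huv hu0 hv0)
    · obtain ⟨kv, rfl⟩ := hve
      have hXv : f kv ∈ X := by
        by_contra hXv
        rcases hdeg kv u hXv huv.symm with rfl | rfl
        · exact hue ⟨kv + 1, rfl⟩
        · exact hue ⟨kv + (n - 1), rfl⟩
      have h1 := hback kv hXv hv
      have hv0 : f kv ∉ S := hC3' _ (hmemf kv) hXv
      have hu0 : u ∉ S := hnotC_notS u hu hue
      rw [hψf, hψid u hue]
      exact (Avoid.of_adj huv hu0 hv0).trans h1.symm
    · rw [hψid u hue, hψid v hve]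
      exact Avoid.of_adj huv (hnotC_notS u hu hue) (hnotC_notS v hv hve)
  exact ⟨S', hcard1, comp_bound hψinj hψnotS hedge hS2, hcard2⟩

/-- Rotation lemma: if every vertex outside `X` has degree at most 2 and there is a
separator `S` with `|S| ≤ p` leaving components of size at most `ℓ`, then there is such a
separator with the additional property that every cycle meeting `X` either avoids `S` or
meets `X ∩ S`. -/
theorem exists_rotated_separator [Fintype V] (G : SimpleGraph V) (X : Set V)
    (hX : ∀ v ∉ X, (G.neighborSet v).ncard ≤ 2)
    (ℓ p : ℕ) (hℓ : 0 < ℓ) (hp : 0 < p)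
    (h : ∃ S : Set V, S.ncard ≤ p ∧ ∀ D ∈ ccSets G S, D.ncard ≤ ℓ) :
    ∃ S : Set V, S.ncard ≤ p ∧ (∀ D ∈ ccSets G S, D.ncard ≤ ℓ) ∧
      ∀ (x : V) (c : G.Walk x x), c.IsCycle →
        ({v | v ∈ c.support} ∩ X).Nonempty →
          {v | v ∈ c.support} ∩ S = ∅ ∨ ({v | v ∈ c.support} ∩ X ∩ S).Nonempty := by
  classical
  set M : Set ℕ := {k | ∃ S : Set V, (S.ncard ≤ p ∧ ∀ D ∈ ccSets G S, D.ncard ≤ ℓ) ∧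
    (S \ X).ncard = k} with hM
  have hMne : M.Nonempty := by
    obtain ⟨S, hS⟩ := h
    exact ⟨(S \ X).ncard, S, hS, rfl⟩
  obtain ⟨S, hSvalid, hSmin⟩ : ∃ S : Set V, (S.ncard ≤ p ∧ ∀ D ∈ ccSets G S, D.ncard ≤ ℓ) ∧
      (S \ X).ncard = sInf M := Nat.sInf_mem hMne
  refine ⟨S, hSvalid.1, hSvalid.2, ?_⟩
  intro x c hcyc hC1
  by_contra hcon
  push_neg at hcon
  obtain ⟨h1, h2⟩ := hcon
  obtain ⟨S', hc1, hc2, hc3⟩ := rotate_step G X S hX hcyc hC1 h1 h2 hSvalid.2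
  have hmem : (S' \ X).ncard ∈ M := ⟨S', ⟨hc1.trans hSvalid.1, hc2⟩, rfl⟩
  have := Nat.sInf_le hmem
  omega
end

section
/- Let G be a finite simple graph, let C ⊆ V(G) with |C| = k, and let S ⊆ V(G) ∖ C. Suppose that every connected component D of G − S satisfies 10·|D ∩ C| < k. Then there exists a set A ⊆ C with 2|A| ≥ k and 5|A| ≤ 3k such that every connected component D of G − S satisfies either D ∩ C ⊆ A or D ∩ C ⊆ C ∖ A. -/
open SimpleGraph

variable {V : Type*}

/-- ncard of a disjoint finite union over a Finset. -/
lemma ncard_biUnion_finset {ι : Type*} [Fintype V] (T : Finset ι) (g : ι → Set V)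
    (hdisj : ∀ i ∈ T, ∀ j ∈ T, i ≠ j → Disjoint (g i) (g j)) :
    (⋃ i ∈ T, g i).ncard = ∑ i ∈ T, (g i).ncard := by
  classical
  induction T using Finset.induction with
  | empty => simp
  | @insert a s hi ih =>
    rw [Finset.sum_insert hi, Finset.set_biUnion_insert, Set.ncard_union_eq, ih]
    · intro i hi' j hj' hij
      exact hdisj i (Finset.mem_insert_of_mem hi') j (Finset.mem_insert_of_mem hj') hij
    · rw [Set.disjoint_iff_forall_ne]
      rintro x hx y hy rfl
      obtain ⟨i, hi', hxi⟩ := Set.mem_iUnion₂.1 hy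
      exact Set.disjoint_iff_forall_ne.1
        (hdisj a (Finset.mem_insert_self a s) i (Finset.mem_insert_of_mem hi')
          (by rintro rfl; exact hi hi')) hx hxi rfl

/-- The numeric selection lemma. -/
lemma exists_subset_sum {ι : Type*} (s : Finset ι) (f : ι → ℕ) (k : ℕ) (hk : 0 < k)
    (hsum : k ≤ ∑ i ∈ s, f i) (hsmall : ∀ i ∈ s, 10 * f i < k) :
    ∃ T ⊆ s, k ≤ 2 * ∑ i ∈ T, f i ∧ 5 * ∑ i ∈ T, f i ≤ 3 * k := by
  classical
  set P : ℕ → Prop := fun m => ∃ T ⊆ s, (∑ i ∈ T, f i = m) ∧ k ≤ 2 * m with hPdef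
  have hP : ∃ m, P m := ⟨∑ i ∈ s, f i, s, le_refl s, rfl, by omega⟩
  set m := Nat.find hP with hmdef
  have hm := Nat.find_spec hP
  have hmin : ∀ m' < m, ¬ P m' := fun m' h => Nat.find_min hP h
  obtain ⟨T, hTs, hsumT, hk2⟩ := hm
  refine ⟨T, hTs, hsumT ▸ hk2, ?_⟩
  rw [hsumT]
  by_contra hlt
  push_neg at hlt
  -- m > 0, so T has an element with f i > 0
  have hm0 : 0 < m := by omega
  have : ∃ i ∈ T, 0 < f i := by
    by_contra h
    push_neg at h
    have : ∑ i ∈ T, f i = 0 := Finset.sum_eq_zero (fun i hi => by have := h i hi; omega)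
    omega
  obtain ⟨i, hiT, hfi⟩ := this
  have hsub : ∑ j ∈ T.erase i, f j = m - f i := by
    have := Finset.add_sum_erase T f hiT
    omega
  have hfim : f i ≤ ∑ j ∈ T, f j := Finset.single_le_sum (fun j _ => Nat.zero_le _) hiT
  have hne : ¬ (k ≤ 2 * (m - f i)) := by
    intro hcon
    exact hmin (m - f i) (by omega) ⟨T.erase i, (Finset.erase_subset _ _).trans hTs, hsub, hcon⟩
  have h10 : 10 * f i < k := hsmall i (hTs hiT)
  rw [hmdef] at *
  omega

/-- If `|C| = k`, `S ⊆ V(G) ∖ C`, and every connected component `D` of `G − S` satisfies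
`10 · |D ∩ C| < k`, then there is `A ⊆ C` with `k/2 ≤ |A| ≤ 3k/5` such that every connected
component `D` of `G − S` satisfies `D ∩ C ⊆ A` or `D ∩ C ⊆ C ∖ A`. -/
theorem exists_balanced_bipartition [Fintype V] (G : SimpleGraph V) (C : Set V) (k : ℕ)
    (hC : C.ncard = k) (S : Set V) (hS : S ⊆ Cᶜ)
    (hsmall : ∀ D ∈ ccSets G S, 10 * (D ∩ C).ncard < k) :
    ∃ A ⊆ C, k ≤ 2 * A.ncard ∧ 5 * A.ncard ≤ 3 * k ∧
      ∀ D ∈ ccSets G S, D ∩ C ⊆ A ∨ D ∩ C ⊆ C \ A := by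
  classical
  rcases Nat.eq_zero_or_pos k with hk0 | hk
  · exact ⟨∅, Set.empty_subset _, by simp [hk0], by simp [hk0],
      fun D _ => Or.inr (by simp [Set.inter_subset_right])⟩
  set H := G.induce Sᶜ
  have : Finite H.ConnectedComponent := Quot.finite _
  haveI : Fintype H.ConnectedComponent := Fintype.ofFinite _
  set p : H.ConnectedComponent → Set V := fun c => (Subtype.val '' c.supp) ∩ C with hp
  have hdisj : ∀ c c' : H.ConnectedComponent, c ≠ c' → Disjoint (p c) (p c') := by
    intro c c' hne
    have := H.pairwise_disjoint_supp_connectedComponent hne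
    refine Set.disjoint_left.2 ?_
    rintro x ⟨⟨v, hv, rfl⟩, _⟩ ⟨⟨w, hw, hvw⟩, _⟩
    have : w = v := Subtype.val_injective hvw
    subst this
    exact Set.disjoint_left.1 ‹Disjoint c.supp c'.supp› hv hw
  have hcover : C = ⋃ c, p c := by
    ext x
    simp only [Set.mem_iUnion, hp, Set.mem_inter_iff, Set.mem_image]
    constructor
    · intro hx
      have hxS : x ∈ Sᶜ := fun hxS => hS hxS hx
      exact ⟨H.connectedComponentMk ⟨x, hxS⟩, ⟨⟨x, hxS⟩, rfl, rfl⟩, hx⟩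
    · rintro ⟨c, _, hx⟩; exact hx
  have hsumall : ∑ c, (p c).ncard = k := by
    rw [← hC, hcover]
    have := ncard_biUnion_finset (Finset.univ : Finset H.ConnectedComponent) p
      (fun i _ j _ h => hdisj i j h)
    simpa using this.symm
  have hsmall' : ∀ c : H.ConnectedComponent, 10 * (p c).ncard < k := by
    intro c
    have := hsmall (Subtype.val '' c.supp) ⟨c, rfl⟩
    simpa [hp] using this
  obtain ⟨T, _, h1, h2⟩ := exists_subset_sum Finset.univ (fun c => (p c).ncard) k hk
    (le_of_eq hsumall.symm) (fun c _ => hsmall' c)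
  set A : Set V := ⋃ c ∈ T, p c with hA
  have hAC : A ⊆ C := Set.iUnion₂_subset fun c _ => Set.inter_subset_right
  have hAcard : A.ncard = ∑ c ∈ T, (p c).ncard :=
    ncard_biUnion_finset T p (fun i _ j _ h => hdisj i j h)
  refine ⟨A, hAC, by omega, by omega, ?_⟩
  rintro D ⟨c, rfl⟩
  by_cases hc : c ∈ T
  · exact Or.inl (Set.subset_iUnion₂_of_subset c hc subset_rfl)
  · refine Or.inr fun x hx => ⟨hx.2, fun hxA => ?_⟩
    obtain ⟨c', hc', hxc'⟩ := Set.mem_iUnion₂.1 hxA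
    exact Set.disjoint_left.1 (hdisj c c' (by rintro rfl; exact hc hc')) hx hxc'
end

section
/- Let G be a finite simple graph, let C be a vertex cover of G, let I = V(G) ∖ C, and let S ⊆ I be an irredundant set. Let D be a connected component of G − S and suppose A = D ∩ C is nonempty. Then: (i) D ∖ A = { v ∈ I : N(v) ≠ ∅ and N(v) ⊆ A }, where N(v) denotes the neighborhood of v in G; and (ii) every vertex v ∈ I with N(v) ∩ A ≠ ∅ and N(v) ∩ (C ∖ A) ≠ ∅ belongs to S. -/
open SimpleGraph

variable {V : Type*}

/-- Let `C` be a vertex cover of `G`, `I = V(G) ∖ C`, and `S ⊆ I` irredundant. If `D` is a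
connected component of `G − S` with `A = D ∩ C` nonempty, then
(i) `D ∖ A = { v ∈ I : N(v) ≠ ∅ ∧ N(v) ⊆ A }`, and
(ii) every `v ∈ I` with neighbors both in `A` and in `C ∖ A` belongs to `S`. -/
theorem component_determined_by_cover_intersection [Fintype V] (G : SimpleGraph V)
    (C : Set V) (hC : ∀ a b, G.Adj a b → a ∈ C ∨ b ∈ C)
    (S : Set V) (hS : S ⊆ Cᶜ) (hirr : Irredundant G S)
    (D : Set V) (hD : D ∈ ccSets G S) (hA : (D ∩ C).Nonempty) :
    D \ (D ∩ C) =
        {v | v ∈ Cᶜ ∧ (G.neighborSet v).Nonempty ∧ G.neighborSet v ⊆ D ∩ C} ∧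
      ∀ v ∈ Cᶜ, (G.neighborSet v ∩ (D ∩ C)).Nonempty →
        (G.neighborSet v ∩ (C \ (D ∩ C))).Nonempty → v ∈ S := by
  obtain ⟨c, rfl⟩ := hD
  set D : Set V := Subtype.val '' c.supp with hDdef
  have memD : ∀ x : V, x ∈ D ↔
      ∃ hx : x ∈ Sᶜ, (G.induce Sᶜ).connectedComponentMk ⟨x, hx⟩ = c := by
    intro x
    constructor
    · rintro ⟨⟨y, hy⟩, hmem, rfl⟩
      exact ⟨hy, hmem⟩
    · rintro ⟨hx, h⟩
      exact ⟨⟨x, hx⟩, h, rfl⟩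
  have step : ∀ x y, x ∈ D → G.Adj x y → y ∉ S → y ∈ D := by
    intro x y hx hxy hyS
    rw [memD] at hx ⊢
    obtain ⟨hxS, hc⟩ := hx
    refine ⟨hyS, ?_⟩
    rw [← hc]
    refine (SimpleGraph.ConnectedComponent.sound (SimpleGraph.Adj.reachable ?_)).symm
    simpa using hxy
  constructor
  · ext v
    simp only [Set.mem_diff, Set.mem_setOf_eq, Set.mem_inter_iff, Set.mem_compl_iff]
    constructor
    · rintro ⟨hvD, hvA⟩
      have hvC : v ∉ C := fun h => hvA ⟨hvD, h⟩
      refine ⟨hvC, ?_, ?_⟩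
      · -- v has a neighbor: D contains some a ∈ C with a ≠ v, connectedness gives an edge
        obtain ⟨a, haD, haC⟩ := hA
        rw [memD] at hvD haD
        obtain ⟨hvS, hcv⟩ := hvD
        obtain ⟨haS, hca⟩ := haD
        have hreach : (G.induce Sᶜ).Reachable ⟨v, hvS⟩ ⟨a, haS⟩ :=
          SimpleGraph.ConnectedComponent.exact (hcv.trans hca.symm)
        obtain ⟨p⟩ := hreach
        cases p with
        | nil => exact absurd haC (by simpa using hvC)
        | cons h _ =>
          rename_i u _
          exact ⟨u.val, by simpa using h⟩
      · intro u hu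
        have huC : u ∈ C := (hC v u hu).resolve_left (by simpa using hvC)
        have huS : u ∉ S := fun h => (hS h) huC
        exact ⟨step v u hvD hu huS, huC⟩
    · rintro ⟨hvC, ⟨u, hu⟩, hsub⟩
      have huA : u ∈ D ∩ C := hsub hu
      have hvS : v ∉ S := by
        intro hvSmem
        apply hirr v hvSmem
        intro D1 hD1 D2 hD2
        obtain ⟨hD1cc, u1, hu1D1, hadj1⟩ := hD1
        obtain ⟨hD2cc, u2, hu2D2, hadj2⟩ := hD2
        have hu1A : u1 ∈ D := (hsub hadj1).1
        have hu2A : u2 ∈ D := (hsub hadj2).1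
        -- each Di equals D since they share a vertex with D
        have key : ∀ (E : Set V) (w : V), E ∈ ccSets G S → w ∈ E → w ∈ D → E = D := by
          rintro E w ⟨c', rfl⟩ hwE hwD
          rw [memD] at hwD
          obtain ⟨hwS, hcw⟩ := hwD
          obtain ⟨⟨w', hw'S⟩, hw'mem, hw'eq⟩ := hwE
          cases hw'eq
          have : c' = c := by
            rw [← hw'mem, ← hcw]
          rw [this]
        rw [key D1 u1 hD1cc hu1D1 hu1A, key D2 u2 hD2cc hu2D2 hu2A]
      have hvD : v ∈ D := step u v huA.1 hu.symm hvS
      exact ⟨hvD, fun h => hvC h.2⟩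
  · rintro v hvC ⟨a, haN, haA⟩ ⟨b, hbN, hbC, hbA⟩
    by_contra hvS
    have hvD : v ∈ D := step a v haA.1 (haN : G.Adj v a).symm hvS
    have hbS : b ∉ S := fun h => (hS h) hbC
    have hbD : b ∈ D := step v b hvD hbN hbS
    exact hbA ⟨hbD, hbC⟩
end
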